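/- Let λ ∈ ℂ∖[−2,2] and z ∈ D∖{0} with λ = z + 1/z. Then there exist absolute constants c, C > 0 (depending only on a lower bound δ for |z|) such that c·(1−|z|)·|1−z²| ≤ dist(λ, [−2,2]) ≤ C·(1−|z|)·|1−z²|. -/

import Mathlib

open Complex Metric

/-- The segment `[−2,2]` viewed as a subset of `ℂ`. -/
def segTwo : Set ℂ := (fun x : ℝ => (x : ℂ)) '' Set.Icc (-2 : ℝ) 2

/-!
The segment `[−2,2]` is the image of the unit circle under `w ↦ w + w⁻¹`, and
`z + z⁻¹ - (w + w⁻¹) = (z - w) (z - w⁻¹) / z`. For `|w| = 1` both factors are at least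
`1 - |z|`, and `1 - z² = -(z (z - w) + w (z - w⁻¹))` bounds their sum below by `|1 - z²|`, so
their product is at least `(1 - |z|) |1 - z²| / 2`. For the upper bound take `w = z / |z|`:
then `|z - w| = 1 - |z|` and `|z - w⁻¹| ≤ 2 |1 - z²|`, which gives the constant `2 / δ`.
-/

lemma add_inv_sub_add_inv {z w : ℂ} (hz : z ≠ 0) (hw : w ≠ 0) :
    z + z⁻¹ - (w + w⁻¹) = (z - w) * (z - w⁻¹) / z := by
  field_simp
  ring

lemma segTwo_eq_image_sphere : segTwo = (fun w : ℂ => w + w⁻¹) '' sphere 0 1 := by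
  ext x
  constructor
  · rintro ⟨t, ht, rfl⟩
    refine ⟨exp (Real.arccos (t / 2) * I), by simp [norm_exp_ofReal_mul_I], ?_⟩
    have hcos : Real.cos (Real.arccos (t / 2)) = t / 2 :=
      Real.cos_arccos (by linarith [ht.1]) (by linarith [ht.2])
    dsimp only
    rw [← exp_neg, ← neg_mul, ← two_cos, ← ofReal_cos, hcos]
    push_cast
    ring
  · rintro ⟨w, hw, rfl⟩
    rw [mem_sphere_zero_iff_norm] at hw
    have hre := abs_le.mp ((abs_re_le_norm w).trans_eq hw)
    refine ⟨2 * w.re, ⟨by linarith, by linarith⟩, ?_⟩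
    dsimp only
    rw [inv_eq_conj hw, add_conj]

lemma norm_one_sub_sq_le {z w : ℂ} (hw : ‖w‖ = 1) (hz : ‖z‖ ≤ 1) :
    ‖1 - z ^ 2‖ ≤ ‖z - w‖ + ‖z - w⁻¹‖ := by
  have hw0 : w ≠ 0 := norm_ne_zero_iff.mp (by rw [hw]; exact one_ne_zero)
  have key : 1 - z ^ 2 = -(z * (z - w) + w * (z - w⁻¹)) := by
    field_simp
    ring
  calc ‖1 - z ^ 2‖ ≤ ‖z‖ * ‖z - w‖ + ‖w‖ * ‖z - w⁻¹‖ := by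
        rw [key, norm_neg, ← norm_mul, ← norm_mul]; exact norm_add_le _ _
    _ ≤ ‖z - w‖ + ‖z - w⁻¹‖ := by
        rw [hw, one_mul]; gcongr; exact mul_le_of_le_one_left (norm_nonneg _) hz

lemma one_sub_norm_le_norm_sub {z w : ℂ} (hw : ‖w‖ = 1) : 1 - ‖z‖ ≤ ‖z - w‖ := by
  simpa [hw] using norm_sub_norm_le w z |>.trans_eq (norm_sub_rev w z)

lemma half_mul_le_norm_add_inv_sub_add_inv {z w : ℂ} (hz0 : z ≠ 0) (hz1 : ‖z‖ ≤ 1)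
    (hw : ‖w‖ = 1) : 1 / 2 * ((1 - ‖z‖) * ‖1 - z ^ 2‖) ≤ ‖z + z⁻¹ - (w + w⁻¹)‖ := by
  have hw0 : w ≠ 0 := norm_ne_zero_iff.mp (by rw [hw]; exact one_ne_zero)
  have hA := one_sub_norm_le_norm_sub (z := z) hw
  have hB := one_sub_norm_le_norm_sub (z := z) (w := w⁻¹) (by rw [norm_inv, hw, inv_one])
  have hsum := norm_one_sub_sq_le hw hz1
  have hpos : 0 < ‖z‖ := norm_pos_iff.mpr hz0
  have ha : 0 ≤ 1 - ‖z‖ := sub_nonneg.mpr hz1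
  rw [add_inv_sub_add_inv hz0 hw0, norm_div, norm_mul, le_div_iff₀ hpos]
  calc 1 / 2 * ((1 - ‖z‖) * ‖1 - z ^ 2‖) * ‖z‖ ≤ 1 / 2 * ((1 - ‖z‖) * ‖1 - z ^ 2‖) :=
        mul_le_of_le_one_right (by positivity) hz1
    _ ≤ 1 / 2 * ((1 - ‖z‖) * (‖z - w‖ + ‖z - w⁻¹‖)) := by gcongr
    _ ≤ ‖z - w‖ * ‖z - w⁻¹‖ := by
        nlinarith [mul_le_mul_of_nonneg_right hA (norm_nonneg (z - w⁻¹)),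
          mul_le_mul_of_nonneg_right hB (norm_nonneg (z - w))]

lemma norm_sub_div_norm {z : ℂ} (hz0 : z ≠ 0) (hz1 : ‖z‖ ≤ 1) :
    ‖z - z / ‖z‖‖ = 1 - ‖z‖ := by
  have hpos : 0 < ‖z‖ := norm_pos_iff.mpr hz0
  have hnorm : (‖z‖ : ℂ) ≠ 0 := ofReal_ne_zero.mpr hpos.ne'
  have key : z - z / ‖z‖ = ((‖z‖ - 1) / ‖z‖ : ℝ) * z := by
    push_cast
    field_simp
  rw [key, norm_mul, norm_real, Real.norm_eq_abs, abs_div, abs_of_nonpos (by linarith),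
    abs_of_pos hpos]
  field_simp
  ring

lemma norm_sub_norm_div_le {z : ℂ} (hz0 : z ≠ 0) (hz1 : ‖z‖ ≤ 1) :
    ‖z - ‖z‖ / z‖ ≤ 2 * ‖1 - z ^ 2‖ := by
  have hpos : 0 < ‖z‖ := norm_pos_iff.mpr hz0
  have hsq : 1 - ‖z‖ ^ 2 ≤ ‖1 - z ^ 2‖ := by
    have := norm_sub_norm_le (1 : ℂ) (z ^ 2)
    rwa [norm_one, Complex.norm_pow] at this
  have key : z - ‖z‖ / z = -(‖z‖ / z) * (1 - z ^ 2) + ((1 - ‖z‖ : ℝ) : ℂ) * z := by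
    push_cast
    field_simp
    ring
  calc ‖z - ‖z‖ / z‖ ≤ ‖1 - z ^ 2‖ + (1 - ‖z‖) * ‖z‖ := by
        rw [key]
        refine (norm_add_le _ _).trans_eq ?_
        rw [norm_mul, norm_neg, norm_div, norm_real, norm_mul, norm_real, Real.norm_eq_abs,
          Real.norm_eq_abs, abs_of_pos hpos, abs_of_nonneg (by linarith), div_self hpos.ne',
          one_mul]
    _ ≤ 2 * ‖1 - z ^ 2‖ := by nlinarith

lemma norm_add_inv_sub_add_inv_div_norm_le {z : ℂ} (hz0 : z ≠ 0) (hz1 : ‖z‖ ≤ 1) :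
    ‖z + z⁻¹ - (z / ‖z‖ + (z / ‖z‖)⁻¹)‖ ≤ 2 * ((1 - ‖z‖) * ‖1 - z ^ 2‖) / ‖z‖ := by
  have hpos : 0 < ‖z‖ := norm_pos_iff.mpr hz0
  have hw0 : z / ‖z‖ ≠ 0 := div_ne_zero hz0 (ofReal_ne_zero.mpr hpos.ne')
  rw [add_inv_sub_add_inv hz0 hw0, inv_div, norm_div, norm_mul, norm_sub_div_norm hz0 hz1,
    mul_left_comm]
  gcongr
  exact norm_sub_norm_div_le hz0 hz1

theorem joukowski_dist_comparison_general (δ : ℝ) (hδ0 : 0 < δ) :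
    ∃ c C : ℝ, 0 < c ∧ 0 < C ∧ ∀ z : ℂ, δ ≤ ‖z‖ → ‖z‖ < 1 →
      c * ((1 - ‖z‖) * ‖1 - z ^ 2‖) ≤
        Metric.infDist (z + 1 / z) segTwo ∧
      Metric.infDist (z + 1 / z) segTwo ≤
        C * ((1 - ‖z‖) * ‖1 - z ^ 2‖) := by
  refine ⟨1 / 2, 2 / δ, by norm_num, by positivity, fun z hδz hz1 => ?_⟩
  have hpos : 0 < ‖z‖ := hδ0.trans_le hδz
  have hz0 : z ≠ 0 := norm_pos_iff.mp hpos
  have hw : z / ‖z‖ ∈ sphere (0 : ℂ) 1 := by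
    rw [mem_sphere_zero_iff_norm, norm_div, norm_real, norm_norm, div_self hpos.ne']
  rw [segTwo_eq_image_sphere, one_div z]
  constructor
  · rw [le_infDist ⟨_, Set.mem_image_of_mem _ hw⟩]
    rintro _ ⟨w, hw1, rfl⟩
    rw [dist_eq]
    exact half_mul_le_norm_add_inv_sub_add_inv hz0 hz1.le (mem_sphere_zero_iff_norm.mp hw1)
  · calc infDist (z + z⁻¹) ((fun w : ℂ => w + w⁻¹) '' sphere 0 1)
          ≤ dist (z + z⁻¹) (z / ‖z‖ + (z / ‖z‖)⁻¹) :=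
            infDist_le_dist_of_mem (Set.mem_image_of_mem _ hw)
      _ ≤ 2 * ((1 - ‖z‖) * ‖1 - z ^ 2‖) / ‖z‖ := by
          rw [dist_eq]; exact norm_add_inv_sub_add_inv_div_norm_le hz0 hz1.le
      _ ≤ 2 / δ * ((1 - ‖z‖) * ‖1 - z ^ 2‖) := by
          rw [div_mul_eq_mul_div]
          gcongr

/-- Lemma 3, first relation: under the Joukowski map `λ = z + 1/z` with `δ ≤ |z| < 1`,
`dist(λ,[−2,2]) ≍ (1−|z|)·|1−z²|`, with constants depending only on `δ`. -/
theorem joukowski_dist_comparison (δ : ℝ) (hδ0 : 0 < δ) (hδ1 : δ < 1) :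
    ∃ c C : ℝ, 0 < c ∧ 0 < C ∧ ∀ z : ℂ, δ ≤ ‖z‖ → ‖z‖ < 1 →
      c * ((1 - ‖z‖) * ‖1 - z ^ 2‖) ≤
        Metric.infDist (z + 1 / z) segTwo ∧
      Metric.infDist (z + 1 / z) segTwo ≤
        C * ((1 - ‖z‖) * ‖1 - z ^ 2‖) :=
  joukowski_dist_comparison_general δ hδ0
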